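/- arXiv:2103.07870 — 2 statements merged into one kernel-verified Lean document; each statement's English description precedes it below -/
import Mathlib

section
/- Let b_1 < b_2 < ... < b_{2N-1} be real numbers and for a < b_1 define g(a) = ∏_{i odd, i>1} (1+√((b_1−a)/(b_i−a)))/(1−√((b_1−a)/(b_i−a))) · ∏_{i even} (1−√((b_1−a)/(b_i−a)))/(1+√((b_1−a)/(b_i−a))). Then lim_{a→−∞} g(a) = ∏_{j=1}^{N−1} (b_{2j}−b_1)/(b_{2j+1}−b_1). -/
/-! With `s = √((x - a) / (c - a))` we have `1 - s² = (c - x) / (c - a)`, hence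
`(c - a) (1 - s) / (1 + s) = (c - x) / (1 + s)² → (c - x) / 4` as `a → -∞`, since `s → 1`.
Pairing the factor of `b (2j)` with the reciprocal factor of `b (2j+1)`, the factors `c - a` cancel up to
`(b (2j+1) - a) / (b (2j) - a) → 1`, so each pair tends to `(b (2j) - b 1) / (b (2j+1) - b 1)`. -/

open Filter Topology Finset

lemma Finset.prod_filter_odd_Icc {M : Type*} [CommMonoid M] (N : ℕ) (f : ℕ → M) :
    ∏ i ∈ (Icc 2 (2 * N - 1)).filter Odd, f i = ∏ j ∈ Icc 1 (N - 1), f (2 * j + 1) := by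
  refine prod_nbij' (· / 2) (2 * · + 1) ?_ ?_ ?_ ?_ ?_ <;>
    intro i hi <;> simp only [mem_filter, mem_Icc, Nat.odd_iff] at hi ⊢
  all_goals first | omega | (congr 1; omega)

lemma Finset.prod_filter_even_Icc {M : Type*} [CommMonoid M] (N : ℕ) (f : ℕ → M) :
    ∏ i ∈ (Icc 2 (2 * N - 1)).filter Even, f i = ∏ j ∈ Icc 1 (N - 1), f (2 * j) := by
  refine prod_nbij' (· / 2) (2 * ·) ?_ ?_ ?_ ?_ ?_ <;>
    intro i hi <;> simp only [mem_filter, mem_Icc, Nat.even_iff] at hi ⊢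
  all_goals first | omega | (congr 1; omega)

lemma tendsto_sub_div_sub_atBot (c d : ℝ) :
    Tendsto (fun a : ℝ => (c - a) / (d - a)) atBot (𝓝 1) := by
  have hd : Tendsto (fun a : ℝ => d - a) atBot atTop :=
    tendsto_atTop_add_const_left _ d tendsto_neg_atBot_atTop
  have h : Tendsto (fun a : ℝ => 1 + (c - d) / (d - a)) atBot (𝓝 (1 + 0)) :=
    tendsto_const_nhds.add (tendsto_const_nhds.div_atTop hd)
  rw [add_zero] at h
  refine h.congr' ?_
  filter_upwards [eventually_lt_atBot d] with a ha
  field_simp [(sub_pos.2 ha).ne']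
  ring

lemma tendsto_sub_mul_one_sub_sqrt_div_one_add_sqrt_atBot (x c : ℝ) :
    Tendsto (fun a : ℝ => (c - a) *
      ((1 - √((x - a) / (c - a))) / (1 + √((x - a) / (c - a))))) atBot (𝓝 ((c - x) / 4)) := by
  have hs : Tendsto (fun a : ℝ => √((x - a) / (c - a))) atBot (𝓝 1) := by
    simpa using (tendsto_sub_div_sub_atBot x c).sqrt
  have h : Tendsto (fun a : ℝ => (c - x) / (1 + √((x - a) / (c - a))) ^ 2) atBot
      (𝓝 ((c - x) / (1 + 1) ^ 2)) :=
    tendsto_const_nhds.div ((tendsto_const_nhds.add hs).pow 2) (by norm_num)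
  norm_num at h
  refine h.congr' ?_
  filter_upwards [eventually_lt_atBot x, eventually_lt_atBot c] with a hx hc
  have hxa := sub_pos.2 hx
  have hca := sub_pos.2 hc
  have hsq : (c - a) * √((x - a) / (c - a)) ^ 2 = x - a := by
    rw [Real.sq_sqrt (by positivity)]
    field_simp
  have hpos : 0 < 1 + √((x - a) / (c - a)) := by positivity
  field_simp
  linear_combination hsq

lemma tendsto_one_add_sqrt_div_one_sub_sqrt_mul_atBot {x c₀ c₁ : ℝ} (h : c₁ ≠ x) :
    Tendsto (fun a : ℝ =>
      (1 + √((x - a) / (c₁ - a))) / (1 - √((x - a) / (c₁ - a))) *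
        ((1 - √((x - a) / (c₀ - a))) / (1 + √((x - a) / (c₀ - a)))))
      atBot (𝓝 ((c₀ - x) / (c₁ - x))) := by
  have h₀ := tendsto_sub_mul_one_sub_sqrt_div_one_add_sqrt_atBot x c₀
  have h₁ := tendsto_sub_mul_one_sub_sqrt_div_one_add_sqrt_atBot x c₁
  have hlim := (h₀.div h₁ (by simpa [sub_eq_zero] using h)).mul (tendsto_sub_div_sub_atBot c₁ c₀)
  rw [div_div_div_cancel_right₀ four_ne_zero, mul_one] at hlim
  refine hlim.congr' ?_
  filter_upwards [eventually_lt_atBot c₀, eventually_lt_atBot c₁] with a h₀a h₁a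
  have hc₀a : c₀ - a ≠ 0 := (sub_pos.2 h₀a).ne'
  have hc₁a : c₁ - a ≠ 0 := (sub_pos.2 h₁a).ne'
  simp only [Pi.div_apply]
  rw [← inv_div (1 - √((x - a) / (c₁ - a)))]
  generalize (1 - √((x - a) / (c₀ - a))) / (1 + √((x - a) / (c₀ - a))) = q₀
  generalize (1 - √((x - a) / (c₁ - a))) / (1 + √((x - a) / (c₁ - a))) = q₁
  field_simp [hc₀a, hc₁a]

theorem limit_g_atBot_general (N : ℕ) (b : ℕ → ℝ)
    (hmono : ∀ i j, 1 ≤ i → i < j → j ≤ 2 * N - 1 → b i < b j) :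
    Tendsto (fun a : ℝ =>
        (∏ i ∈ (Finset.Icc 2 (2 * N - 1)).filter (fun i => Odd i),
          (1 + Real.sqrt ((b 1 - a) / (b i - a))) / (1 - Real.sqrt ((b 1 - a) / (b i - a)))) *
        (∏ i ∈ (Finset.Icc 2 (2 * N - 1)).filter (fun i => Even i),
          (1 - Real.sqrt ((b 1 - a) / (b i - a))) / (1 + Real.sqrt ((b 1 - a) / (b i - a)))))
      atBot (nhds (∏ j ∈ Finset.Icc 1 (N - 1), (b (2 * j) - b 1) / (b (2 * j + 1) - b 1))) := by
  simp only [prod_filter_odd_Icc, prod_filter_even_Icc, ← prod_mul_distrib]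
  refine tendsto_finsetProd _ fun j hj => ?_
  rw [mem_Icc] at hj
  exact tendsto_one_add_sqrt_div_one_sub_sqrt_mul_atBot
    (hmono 1 (2 * j + 1) le_rfl (by omega) (by omega)).ne'

theorem limit_g_atBot (N : ℕ) (hN : 1 ≤ N) (b : ℕ → ℝ)
    (hmono : ∀ i j, 1 ≤ i → i < j → j ≤ 2 * N - 1 → b i < b j) :
    Tendsto (fun a : ℝ =>
        (∏ i ∈ (Finset.Icc 2 (2 * N - 1)).filter (fun i => Odd i),
          (1 + Real.sqrt ((b 1 - a) / (b i - a))) / (1 - Real.sqrt ((b 1 - a) / (b i - a)))) *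
        (∏ i ∈ (Finset.Icc 2 (2 * N - 1)).filter (fun i => Even i),
          (1 - Real.sqrt ((b 1 - a) / (b i - a))) / (1 + Real.sqrt ((b 1 - a) / (b i - a)))))
      atBot (nhds (∏ j ∈ Finset.Icc 1 (N - 1), (b (2 * j) - b 1) / (b (2 * j + 1) - b 1))) :=
  limit_g_atBot_general N b hmono
end

section
/- Suppose a(t) < b(t) < c(t) are differentiable with a'(t) = 2/(a(t)−w(t)), b'(t) = 2/(b(t)−w(t)), c'(t) = 2/(c(t)−w(t)) for a continuous function w(t) < a(t). Then the cross-ratio-type quantity (b(t)−a(t))/(c(t)−a(t)) is monotone non-increasing in t. -/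
theorem crossratio_antitone (w a b c : ℝ → ℝ) (hw : Continuous w)
    (horder : ∀ t, w t < a t ∧ a t < b t ∧ b t < c t)
    (ha : ∀ t, HasDerivAt a (2 / (a t - w t)) t)
    (hb : ∀ t, HasDerivAt b (2 / (b t - w t)) t)
    (hc : ∀ t, HasDerivAt c (2 / (c t - w t)) t) :
    Antitone (fun t => (b t - a t) / (c t - a t)) := by
  set f := fun t => (b t - a t) / (c t - a t) with hf
  have key : ∀ t, HasDerivAt f
      (((2 / (b t - w t) - 2 / (a t - w t)) * (c t - a t)
        - (b t - a t) * (2 / (c t - w t) - 2 / (a t - w t))) / (c t - a t)^2) t := by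
    intro t
    obtain ⟨h1, h2, h3⟩ := horder t
    have hca : c t - a t ≠ 0 := by linarith
    exact ((hb t).sub (ha t)).div ((hc t).sub (ha t)) hca
  have hderiv : ∀ t, deriv f t ≤ 0 := by
    intro t
    rw [(key t).deriv]
    obtain ⟨h1, h2, h3⟩ := horder t
    have hA : 0 < a t - w t := by linarith
    have hB : 0 < b t - w t := by linarith
    have hC : 0 < c t - w t := by linarith
    apply div_nonpos_of_nonpos_of_nonneg _ (sq_nonneg _)
    have eq : (2 / (b t - w t) - 2 / (a t - w t)) * (c t - a t)
        - (b t - a t) * (2 / (c t - w t) - 2 / (a t - w t))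
        = -(2 * (b t - a t) * (c t - a t) * (c t - b t))
          / ((a t - w t) * (b t - w t) * (c t - w t)) := by
      field_simp
      ring
    rw [eq]
    apply div_nonpos_of_nonpos_of_nonneg
    · nlinarith [mul_pos (mul_pos (by linarith : (0:ℝ) < b t - a t)
        (by linarith : (0:ℝ) < c t - a t)) (by linarith : (0:ℝ) < c t - b t)]
    · positivity
  exact antitone_of_deriv_nonpos (fun t => (key t).differentiableAt) hderiv
end
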